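/- For any Conwell heptad H and any off-quadric point v not in H, exactly one of the six external lines through v meets H (and the remaining five are disjoint from H): the number of 3-element sets L of nonzero vectors of (Fin 6 → ZMod 2), each with Q-value 1, summing to 0, with v ∈ L and L ∩ H ≠ ∅ is exactly 1. -/

import Mathlib

/-- The hyperbolic quadratic form on GF(2)^6. -/
def Q (v : Fin 6 → ZMod 2) : ZMod 2 := v 0 * v 1 + v 2 * v 3 + v 4 * v 5

/-- A Conwell heptad: a set of seven off-quadric points such that the line joining any
two of them is external to the quadric. -/
def IsConwellHeptad (H : Finset (Fin 6 → ZMod 2)) : Prop :=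
  H.card = 7 ∧ (∀ v ∈ H, v ≠ 0 ∧ Q v = 1) ∧
    ∀ a ∈ H, ∀ b ∈ H, a ≠ b → Q (a + b) = 1

/-!
Let `B` be the polar form of `Q`. On a heptad `B` equals `1` off the diagonal, so for distinct
`a, b, c ∈ H` we get `Q (a + b + c) = Q (a + b) + Q c + B (a + b) c = 1 + 1 + (1 + 1) = 0`.
Hence for a pair `{a, b} ⊆ H` the points `x ∈ H` with `Q (a + b + x) = 1` are exactly `a` and `b`:
a pair is recovered from its sum. The `21` pair sums are therefore distinct off-quadric points,
and they avoid `H` (test `a + b ∈ H` against a fourth point of `H`). Since `Q⁺(5,2)` has exactly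
`28 = 7 + 21` off-quadric points, every off-quadric `v ∉ H` is `a + b` for a unique pair, and an
external line `{v, x, v + x}` with `x ∈ H` forces `x ∈ {a, b}`, i.e. it is the line `{v, a, b}`.
-/

open Finset QuadraticMap

section CharTwo

variable {V : Type*} [AddCommGroup V] [Module (ZMod 2) V]

/-- Over `GF(2)` the line through `a` and `b` is `{a, b, a + b}`, so this says that every line
joining two points of `H` is external to the quadric `q = 0`. -/
def IsPairwiseExternal (q : QuadraticForm (ZMod 2) V) (H : Finset V) : Prop :=
  (∀ a ∈ H, q a = 1) ∧ ∀ a ∈ H, ∀ b ∈ H, a ≠ b → q (a + b) = 1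

def IsExternalLine (q : QuadraticForm (ZMod 2) V) (L : Finset V) : Prop :=
  L.card = 3 ∧ ∑ w ∈ L, w = 0 ∧ ∀ w ∈ L, q w = 1

theorem eq_triple_of_card_eq_three_of_sum_eq_zero [DecidableEq V] {L : Finset V}
    (hL : L.card = 3) (hsum : ∑ w ∈ L, w = 0) {v x : V} (hv : v ∈ L) (hx : x ∈ L) (hxv : x ≠ v) :
    L = {v, x, v + x} := by
  have hx' : x ∈ L.erase v := mem_erase.mpr ⟨hxv, hx⟩
  obtain ⟨y, hy⟩ : ∃ y, (L.erase v).erase x = {y} := card_eq_one.mp <| by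
    rw [card_erase_of_mem hx', card_erase_of_mem hv, hL]
  have hyxv : y + (x + v) = 0 := by
    rw [← hsum, ← sum_erase_add L _ hv, ← sum_erase_add _ _ hx', hy, sum_singleton, add_assoc]
  have hy' : y = v + x := by
    rw [eq_neg_of_add_eq_zero_left hyxv, ZModModule.neg_eq_self, add_comm]
  rw [← hy', ← hy, insert_erase hx', insert_erase hv]

theorem pair_eq_insert_sum_add [DecidableEq V] {s : Finset V} (hs : s.card = 2) {x : V}
    (hx : x ∈ s) : s = {x, (∑ y ∈ s, y) + x} := by
  obtain ⟨a, b, hab, rfl⟩ := card_eq_two.mp hs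
  rw [sum_pair hab]
  rcases mem_insert.mp hx with rfl | hxb
  · rw [add_comm x b, add_assoc, ZModModule.add_self, add_zero]
  · rw [mem_singleton.mp hxb, add_assoc, ZModModule.add_self, add_zero, pair_comm]

namespace IsPairwiseExternal

variable {q : QuadraticForm (ZMod 2) V} {H : Finset V}

theorem polar_eq_one (hH : IsPairwiseExternal q H) {a b : V} (ha : a ∈ H) (hb : b ∈ H)
    (hab : a ≠ b) : polar q a b = 1 := by
  have h := QuadraticMap.map_add q a b
  rw [hH.2 a ha b hb hab, hH.1 a ha, hH.1 b hb] at h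
  generalize polar q a b = p at h ⊢
  revert p
  decide

theorem map_add_add_eq_zero (hH : IsPairwiseExternal q H) {a b c : V} (ha : a ∈ H) (hb : b ∈ H)
    (hc : c ∈ H) (hab : a ≠ b) (hac : a ≠ c) (hbc : b ≠ c) : q (a + b + c) = 0 := by
  rw [QuadraticMap.map_add q (a + b) c, polar_add_left, hH.2 a ha b hb hab, hH.1 c hc,
    hH.polar_eq_one ha hc hac, hH.polar_eq_one hb hc hbc]
  decide

theorem filter_map_sum_add_eq_one [DecidableEq V] (hH : IsPairwiseExternal q H) {s : Finset V}
    (hsH : s ⊆ H) (hs : s.card = 2) : {x ∈ H | q ((∑ y ∈ s, y) + x) = 1} = s := by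
  ext x
  rw [mem_filter]
  constructor
  · rintro ⟨hxH, hqx⟩
    by_contra hxs
    obtain ⟨a, b, hab, rfl⟩ := card_eq_two.mp hs
    simp only [mem_insert, mem_singleton, not_or] at hxs
    rw [sum_pair hab, hH.map_add_add_eq_zero (hsH (mem_insert_self a _))
      (hsH (mem_insert_of_mem (mem_singleton_self b))) hxH hab (Ne.symm hxs.1)
      (Ne.symm hxs.2)] at hqx
    exact zero_ne_one hqx
  · intro hxs
    refine ⟨hsH hxs, hH.1 _ (hsH ?_)⟩
    have hpair := pair_eq_insert_sum_add hs hxs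
    generalize ∑ y ∈ s, y = v at hpair ⊢
    rw [hpair]
    exact mem_insert_of_mem (mem_singleton_self _)

theorem injOn_sum_powersetCard_two [DecidableEq V] (hH : IsPairwiseExternal q H) :
    Set.InjOn (fun s ↦ ∑ x ∈ s, x) (H.powersetCard 2 : Set (Finset V)) := by
  intro s hs t ht hst
  rw [mem_coe, mem_powersetCard] at hs ht
  have hrecover := hH.filter_map_sum_add_eq_one hs.1 hs.2
  rwa [show ∑ x ∈ s, x = ∑ x ∈ t, x from hst, hH.filter_map_sum_add_eq_one ht.1 ht.2,
    eq_comm] at hrecover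

theorem add_notMem [DecidableEq V] (hH : IsPairwiseExternal q H) (hcard : 3 < H.card) {a b : V}
    (ha : a ∈ H) (hb : b ∈ H) (hab : a ≠ b) : a + b ∉ H := by
  intro habH
  obtain ⟨d, hdH, hd⟩ := exists_mem_notMem_of_card_lt_card (card_le_three.trans_lt hcard)
  simp only [mem_insert, mem_singleton, not_or] at hd
  have h := hH.map_add_add_eq_zero ha hb hdH hab (Ne.symm hd.1) (Ne.symm hd.2.1)
  rw [hH.2 _ habH d hdH (Ne.symm hd.2.2)] at h
  exact one_ne_zero h

theorem exists_sum_eq [Fintype V] [DecidableEq V] (hH : IsPairwiseExternal q H)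
    (hcard : 3 < H.card) (hcount : #{x | q x = 1} = H.card + H.card.choose 2) {v : V}
    (hv : q v = 1) (hvH : v ∉ H) : ∃ s ∈ H.powersetCard 2, ∑ x ∈ s, x = v := by
  set offQuadric : Finset V := {x | q x = 1}
  have hsub : (H.powersetCard 2).image (fun s ↦ ∑ x ∈ s, x) ⊆ offQuadric \ H := by
    intro x hx
    obtain ⟨s, hs, rfl⟩ := mem_image.mp hx
    obtain ⟨hsH, hs2⟩ := mem_powersetCard.mp hs
    obtain ⟨a, b, hab, rfl⟩ := card_eq_two.mp hs2
    have ha := hsH (mem_insert_self a _)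
    have hb := hsH (mem_insert_of_mem (mem_singleton_self b))
    rw [sum_pair hab, mem_sdiff, mem_filter]
    exact ⟨⟨mem_univ _, hH.2 a ha b hb hab⟩, hH.add_notMem hcard ha hb hab⟩
  have hHsub : H ⊆ offQuadric := fun a ha ↦ mem_filter.mpr ⟨mem_univ a, hH.1 a ha⟩
  have himage : (H.powersetCard 2).image (fun s ↦ ∑ x ∈ s, x) = offQuadric \ H := by
    refine eq_of_subset_of_card_le hsub ?_
    rw [card_image_of_injOn hH.injOn_sum_powersetCard_two, card_powersetCard,
      card_sdiff_of_subset hHsub, hcount]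
    omega
  have hvmem : v ∈ offQuadric \ H :=
    mem_sdiff.mpr ⟨mem_filter.mpr ⟨mem_univ v, hv⟩, hvH⟩
  rw [← himage] at hvmem
  simpa using hvmem

theorem isExternalLine_insert_sum [DecidableEq V] (hH : IsPairwiseExternal q H) {s : Finset V}
    (hsH : s ⊆ H) (hs : s.card = 2) (hvH : ∑ x ∈ s, x ∉ H) :
    IsExternalLine q (insert (∑ x ∈ s, x) s) := by
  have hvs : ∑ x ∈ s, x ∉ s := fun h ↦ hvH (hsH h)
  refine ⟨by rw [card_insert_of_notMem hvs, hs], ?_, ?_⟩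
  · rw [sum_insert hvs, ZModModule.add_self]
  · intro w hw
    rcases mem_insert.mp hw with rfl | hws
    · obtain ⟨a, b, hab, rfl⟩ := card_eq_two.mp hs
      have ha := hsH (mem_insert_self a _)
      rw [sum_pair hab]
      exact hH.2 a ha b (hsH (mem_insert_of_mem (mem_singleton_self b))) hab
    · exact hH.1 w (hsH hws)

theorem eq_insert_sum_of_isExternalLine [DecidableEq V] (hH : IsPairwiseExternal q H)
    {s : Finset V} (hsH : s ⊆ H) (hs : s.card = 2) {L : Finset V} (hL : IsExternalLine q L)
    (hvL : ∑ x ∈ s, x ∈ L) (hvH : ∑ x ∈ s, x ∉ H) {x : V} (hxL : x ∈ L) (hxH : x ∈ H) :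
    L = insert (∑ x ∈ s, x) s := by
  have hxv : x ≠ ∑ y ∈ s, y := fun h ↦ hvH (h ▸ hxH)
  have hline := eq_triple_of_card_eq_three_of_sum_eq_zero hL.1 hL.2.1 hvL hxL hxv
  have hxs : x ∈ s := by
    rw [← hH.filter_map_sum_add_eq_one hsH hs, mem_filter]
    refine ⟨hxH, hL.2.2 _ ?_⟩
    rw [hline]
    simp
  rw [hline, ← pair_eq_insert_sum_add hs hxs]

end IsPairwiseExternal

end CharTwo

-- Its coercion is `Q` by `rfl`, so statements about `Q` apply to it verbatim.
def hyperbolicForm : QuadraticForm (ZMod 2) (Fin 6 → ZMod 2) :=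
  proj 0 1 + proj 2 3 + proj 4 5

theorem card_Q_eq_one : #{v : Fin 6 → ZMod 2 | Q v = 1} = 28 := by
  decide

theorem one_external_line_through_point_meets_heptad_general (H : Finset (Fin 6 → ZMod 2))
    (hH : IsConwellHeptad H) (v : Fin 6 → ZMod 2)
    (hQ : Q v = 1) (hvH : v ∉ H) :
    (Finset.univ.filter (fun L : Finset (Fin 6 → ZMod 2) =>
      v ∈ L ∧ L.card = 3 ∧ (∑ w ∈ L, w) = 0 ∧ (∀ w ∈ L, w ≠ 0 ∧ Q w = 1) ∧
        (L ∩ H).Nonempty)).card = 1 := by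
  obtain ⟨hcard, hHQ, hHext⟩ := hH
  have hext : IsPairwiseExternal hyperbolicForm H := ⟨fun a ha ↦ (hHQ a ha).2, hHext⟩
  obtain ⟨s, hs, rfl⟩ := hext.exists_sum_eq (by omega) (by rw [hcard]; exact card_Q_eq_one) hQ hvH
  obtain ⟨hsH, hs2⟩ := mem_powersetCard.mp hs
  refine card_eq_one.mpr ⟨insert (∑ x ∈ s, x) s, eq_singleton_iff_unique_mem.mpr ⟨?_, ?_⟩⟩
  · obtain ⟨h3, h0, hq⟩ := hext.isExternalLine_insert_sum hsH hs2 hvH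
    obtain ⟨b, hb⟩ := card_pos.mp (by omega : 0 < s.card)
    simp only [mem_filter, mem_univ, mem_insert_self, true_and]
    exact ⟨h3, h0, fun w hw ↦ ⟨fun h0 ↦ by simpa [h0] using hq w hw, hq w hw⟩,
      b, mem_inter.mpr ⟨mem_insert_of_mem hb, hsH hb⟩⟩
  · intro L hL
    obtain ⟨-, hvL, hL3, hL0, hLQ, x, hx⟩ := mem_filter.mp hL
    exact hext.eq_insert_sum_of_isExternalLine hsH hs2 ⟨hL3, hL0, fun w hw ↦ (hLQ w hw).2⟩ hvL
      hvH (mem_inter.mp hx).1 (mem_inter.mp hx).2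

/-- For any Conwell heptad `H` and any off-quadric point `v ∉ H`, exactly one of the six
external lines through `v` meets `H`. -/
theorem one_external_line_through_point_meets_heptad (H : Finset (Fin 6 → ZMod 2))
    (hH : IsConwellHeptad H) (v : Fin 6 → ZMod 2)
    (hv : v ≠ 0) (hQ : Q v = 1) (hvH : v ∉ H) :
    (Finset.univ.filter (fun L : Finset (Fin 6 → ZMod 2) =>
      v ∈ L ∧ L.card = 3 ∧ (∑ w ∈ L, w) = 0 ∧ (∀ w ∈ L, w ≠ 0 ∧ Q w = 1) ∧
        (L ∩ H).Nonempty)).card = 1 :=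
  one_external_line_through_point_meets_heptad_general H hH v hQ hvH
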